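/- arXiv:1210.2202 — 2 statements merged into one kernel-verified Lean document; each statement's English description precedes it below -/
import Mathlib

section
/- For every ρ with 0 < ρ < π, the map F(τ, v, u) = (e^{τ sin v} cos(τ cos v), e^{τ sin v} sin(τ cos v) cos u, e^{τ sin v} sin(τ cos v) sin u) is injective on the domain (0, ρ] × (−π/2, π/2) × (−π, π]. -/
open Real

/-- The geodesic polar coordinate map of `S² × ℝ` around `(1,0,0)` in the Euclidean
model: `F(τ, v, u)` with radial parameter `τ`, altitude `v` and longitude `u`. -/
noncomputable def Fpolar (p : ℝ × ℝ × ℝ) : ℝ × ℝ × ℝ :=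
  (Real.exp (p.1 * Real.sin p.2.1) * Real.cos (p.1 * Real.cos p.2.1),
   Real.exp (p.1 * Real.sin p.2.1) * Real.sin (p.1 * Real.cos p.2.1) * Real.cos p.2.2,
   Real.exp (p.1 * Real.sin p.2.1) * Real.sin (p.1 * Real.cos p.2.1) * Real.sin p.2.2)

/-! With `θ = τ cos v` and `s = τ sin v` one has `F(τ, v, u) = e^s (cos θ, sin θ cos u, sin θ sin u)`,
so `F` factors as `(τ, v, u) ↦ (e^s, θ, u)` followed by spherical coordinates. The first map is
injective because `(τ, v) ↦ (θ, s)` are planar polar coordinates; the second is injective for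
`θ ∈ (0, π)`, which holds since `0 < θ ≤ τ ≤ ρ < π`. -/

open Set

theorem injOn_polarCoord_symm_Ioc :
    InjOn (fun p : ℝ × ℝ => (p.1 * cos p.2, p.1 * sin p.2)) (Ioi 0 ×ˢ Ioc (-π) π) := by
  rintro ⟨r, u⟩ ⟨hr, hu⟩ ⟨r', u'⟩ ⟨hr', hu'⟩ h
  dsimp only at hr hu hr' hu'
  obtain ⟨hcos, hsin⟩ := Prod.mk.inj h
  have hr_eq : r = r' := by
    refine (sq_eq_sq₀ hr.le hr'.le).mp ?_
    linear_combination (r * cos u + r' * cos u') * hcos + (r * sin u + r' * sin u') * hsin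
      - r ^ 2 * sin_sq_add_cos_sq u + r' ^ 2 * sin_sq_add_cos_sq u'
  subst hr_eq
  have hz : (r : ℂ) * (Complex.cos u + Complex.sin u * Complex.I)
      = r * (Complex.cos u' + Complex.sin u' * Complex.I) := by
    apply Complex.ext <;> simp [← Complex.ofReal_cos, ← Complex.ofReal_sin, hcos, hsin]
  rw [← Complex.arg_mul_cos_add_sin_mul_I hr hu, hz, Complex.arg_mul_cos_add_sin_mul_I hr hu']

theorem injOn_sphericalCoord_symm :
    InjOn (fun p : ℝ × ℝ × ℝ =>
        (p.1 * cos p.2.1, p.1 * sin p.2.1 * cos p.2.2, p.1 * sin p.2.1 * sin p.2.2))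
      (Ioi 0 ×ˢ Ioo 0 π ×ˢ Ioc (-π) π) := by
  rintro ⟨r, θ, u⟩ ⟨hr, hθ, hu⟩ ⟨r', θ', u'⟩ ⟨hr', hθ', hu'⟩ h
  dsimp only at hr hθ hu hr' hθ' hu'
  obtain ⟨hx, hy, hz⟩ := Prod.mk.inj h |>.imp_right Prod.mk.inj
  have hθ_Ioc : ∀ {t}, t ∈ Ioo 0 π → t ∈ Ioc (-π) π := fun ht =>
    ⟨by linarith [pi_pos, ht.1], ht.2.le⟩
  obtain ⟨hsin, rfl⟩ := Prod.mk.inj <| injOn_polarCoord_symm_Ioc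
    (mk_mem_prod (mul_pos hr (sin_pos_of_mem_Ioo hθ)) hu)
    (mk_mem_prod (mul_pos hr' (sin_pos_of_mem_Ioo hθ')) hu') (Prod.ext hy hz)
  obtain ⟨rfl, rfl⟩ := Prod.mk.inj <| injOn_polarCoord_symm_Ioc
    (mk_mem_prod hr (hθ_Ioc hθ)) (mk_mem_prod hr' (hθ_Ioc hθ')) (Prod.ext hx hsin)
  rfl

theorem injOn_exp_mul_sin_mul_cos :
    InjOn (fun p : ℝ × ℝ × ℝ => (exp (p.1 * sin p.2.1), p.1 * cos p.2.1, p.2.2))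
      (Ioi 0 ×ˢ Ioc (-π) π ×ˢ univ) := by
  rintro ⟨τ, v, u⟩ ⟨hτ, hv, -⟩ ⟨τ', v', u'⟩ ⟨hτ', hv', -⟩ h
  obtain ⟨hexp, hcos, rfl⟩ := Prod.mk.inj h |>.imp_right Prod.mk.inj
  obtain ⟨rfl, rfl⟩ := Prod.mk.inj <| injOn_polarCoord_symm_Ioc
    (mk_mem_prod hτ hv) (mk_mem_prod hτ' hv') (Prod.ext hcos (exp_injective hexp))
  rfl

theorem polar_injOn_general (ρ : ℝ) (hπ : ρ < π) :
    Set.InjOn Fpolar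
      (Set.Ioc 0 ρ ×ˢ Set.Ioo (-(π / 2)) (π / 2) ×ˢ Set.Ioc (-π) π) := by
  have hdom : Ioc 0 ρ ×ˢ Ioo (-(π / 2)) (π / 2) ×ˢ Ioc (-π) π ⊆ Ioi 0 ×ˢ Ioc (-π) π ×ˢ univ :=
    prod_mono Ioc_subset_Ioi_self <| prod_mono
      (Ioo_subset_Ioc_self.trans (Ioc_subset_Ioc (by linarith [pi_pos]) (by linarith [pi_pos])))
      (subset_univ _)
  have hmaps : MapsTo (fun p : ℝ × ℝ × ℝ => (exp (p.1 * sin p.2.1), p.1 * cos p.2.1, p.2.2))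
      (Ioc 0 ρ ×ˢ Ioo (-(π / 2)) (π / 2) ×ˢ Ioc (-π) π) (Ioi 0 ×ˢ Ioo 0 π ×ˢ Ioc (-π) π) := by
    rintro ⟨τ, v, u⟩ ⟨hτ, hv, hu⟩
    refine ⟨exp_pos _, ⟨mul_pos hτ.1 (cos_pos_of_mem_Ioo hv), ?_⟩, hu⟩
    calc τ * cos v ≤ τ := mul_le_of_le_one_right hτ.1.le (cos_le_one v)
      _ < π := hτ.2.trans_lt hπ
  exact injOn_sphericalCoord_symm.comp (injOn_exp_mul_sin_mul_cos.mono hdom) hmaps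

/-- For `0 < ρ < π` the geodesic polar coordinate map `F` is injective on
`(0, ρ] × (−π/2, π/2) × (−π, π]` (this justifies the change of variables in the
volume formula of Theorem 2.4). -/
theorem polar_injOn (ρ : ℝ) (h0 : 0 < ρ) (hπ : ρ < π) :
    Set.InjOn Fpolar
      (Set.Ioc 0 ρ ×ˢ Set.Ioo (-(π / 2)) (π / 2) ×ˢ Set.Ioc (-π) π) :=
  polar_injOn_general ρ hπ
end

section
/- Let 0 < ρ < π and let B_ρ ⊂ ℝ³ be the image of [0, ρ] × [−π/2, π/2] × (−π, π] under the map F(τ, v, u) = (e^{τ sin v} cos(τ cos v), e^{τ sin v} sin(τ cos v) cos u, e^{τ sin v} sin(τ cos v) sin u). Then the Lebesgue integral of (x² + y² + z²)^{−3/2} over B_ρ equals 2π ∫₀^ρ ∫_{−π/2}^{π/2} τ · sin(τ cos v) dv dτ. (Theorem 2.4: volume of the geodesic ball of radius ρ in S²×ℝ.) -/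
/-!
`Fpolar` is injective on the open box `(0, ρ) × (-π/2, π/2) × (-π, π)`, which differs from the
parameter box by a null set; as `Fpolar` is smooth, so do their images. By the change of variables
formula the integral becomes one over the open box, where the Jacobian determinant
`-τ e^{3τ sin v} sin(τ cos v)` meets the density `|F|^{-3} = e^{-3τ sin v}`, leaving
`τ sin(τ cos v)`, which does not depend on the longitude `u`.
-/

open Real Set MeasureTheory

section

variable {R : Type*} [CommRing R]

@[simps]
def LinearEquiv.prodProdFinThree : (R × R × R) ≃ₗ[R] (Fin 3 → R) where
  toFun p := ![p.1, p.2.1, p.2.2]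
  invFun f := (f 0, f 1, f 2)
  map_add' p q := by ext i; fin_cases i <;> rfl
  map_smul' c p := by ext i; fin_cases i <;> rfl
  left_inv p := rfl
  right_inv f := by ext i; fin_cases i <;> rfl

theorem LinearMap.det_prod_three (f : (R × R × R) →ₗ[R] (R × R × R)) :
    LinearMap.det f =
      (f (1, 0, 0)).1 *
          ((f (0, 1, 0)).2.1 * (f (0, 0, 1)).2.2 - (f (0, 0, 1)).2.1 * (f (0, 1, 0)).2.2) -
        (f (0, 1, 0)).1 *
          ((f (1, 0, 0)).2.1 * (f (0, 0, 1)).2.2 - (f (0, 0, 1)).2.1 * (f (1, 0, 0)).2.2) +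
        (f (0, 0, 1)).1 *
          ((f (1, 0, 0)).2.1 * (f (0, 1, 0)).2.2 - (f (0, 1, 0)).2.1 * (f (1, 0, 0)).2.2) := by
  set b := Module.Basis.ofEquivFun (LinearEquiv.prodProdFinThree (R := R))
  rw [← LinearMap.det_toMatrix b, Matrix.det_fin_three]
  simp only [LinearMap.toMatrix_apply, Module.Basis.ofEquivFun_repr_apply,
    Module.Basis.coe_ofEquivFun, b, LinearEquiv.prodProdFinThree_symm_apply,
    LinearEquiv.prodProdFinThree_apply, Pi.single_eq_same, Pi.single_eq_of_ne, ne_eq,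
    one_ne_zero, zero_ne_one, not_false_eq_true, Fin.reduceEq, Matrix.cons_val_zero,
    Matrix.cons_val_one, Matrix.cons_val]
  ring

end

theorem fderiv_apply_of_hasDerivAt_comp {𝕜 E F : Type*} [NontriviallyNormedField 𝕜]
    [NormedAddCommGroup E] [NormedSpace 𝕜 E] [NormedAddCommGroup F] [NormedSpace 𝕜 F]
    {f : E → F} {x : E} {γ : 𝕜 → E} {t : 𝕜} {e : E} {w : F} (hf : DifferentiableAt 𝕜 f x)
    (hγt : γ t = x) (hγ : HasDerivAt γ e t) (h : HasDerivAt (f ∘ γ) w t) :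
    fderiv 𝕜 f x e = w := by
  subst hγt
  exact (hf.hasFDerivAt.comp_hasDerivAt t hγ).unique h

theorem differentiable_Fpolar : Differentiable ℝ Fpolar := by
  unfold Fpolar
  fun_prop

theorem hasDerivAt_Fpolar_radius (τ v u : ℝ) :
    HasDerivAt (fun t => Fpolar (t, v, u))
      (exp (τ * sin v) * (sin v * cos (τ * cos v) - cos v * sin (τ * cos v)),
        exp (τ * sin v) * (sin v * sin (τ * cos v) + cos v * cos (τ * cos v)) * cos u,
        exp (τ * sin v) * (sin v * sin (τ * cos v) + cos v * cos (τ * cos v)) * sin u) τ := by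
  have hE : HasDerivAt (fun t => exp (t * sin v)) (exp (τ * sin v) * sin v) τ :=
    (hasDerivAt_mul_const _).exp
  have hA : HasDerivAt (fun t => t * cos v) (cos v) τ := hasDerivAt_mul_const _
  have hS := hE.mul hA.sin
  refine ((hE.mul hA.cos).prodMk
    ((hS.mul_const (cos u)).prodMk (hS.mul_const (sin u)))).congr_deriv ?_
  ext <;> dsimp only <;> ring

theorem hasDerivAt_Fpolar_altitude (τ v u : ℝ) :
    HasDerivAt (fun t => Fpolar (τ, t, u))
      (τ * exp (τ * sin v) * (cos v * cos (τ * cos v) + sin v * sin (τ * cos v)),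
        τ * exp (τ * sin v) * (cos v * sin (τ * cos v) - sin v * cos (τ * cos v)) * cos u,
        τ * exp (τ * sin v) * (cos v * sin (τ * cos v) - sin v * cos (τ * cos v)) * sin u) v := by
  have hE : HasDerivAt (fun t => exp (τ * sin t)) (exp (τ * sin v) * (τ * cos v)) v :=
    ((hasDerivAt_sin v).const_mul τ).exp
  have hA : HasDerivAt (fun t => τ * cos t) (τ * -sin v) v := (hasDerivAt_cos v).const_mul τ
  have hS := hE.mul hA.sin
  refine ((hE.mul hA.cos).prodMk
    ((hS.mul_const (cos u)).prodMk (hS.mul_const (sin u)))).congr_deriv ?_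
  ext <;> dsimp only <;> ring

theorem hasDerivAt_Fpolar_longitude (τ v u : ℝ) :
    HasDerivAt (fun t => Fpolar (τ, v, t))
      (0, -(exp (τ * sin v) * sin (τ * cos v) * sin u),
        exp (τ * sin v) * sin (τ * cos v) * cos u) u := by
  have hc := (hasDerivAt_cos u).const_mul (exp (τ * sin v) * sin (τ * cos v))
  have hs := (hasDerivAt_sin u).const_mul (exp (τ * sin v) * sin (τ * cos v))
  exact ((hasDerivAt_const u (exp (τ * sin v) * cos (τ * cos v))).prodMk
    (hc.prodMk hs)).congr_deriv (by simp)

theorem det_fderiv_Fpolar (τ v u : ℝ) :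
    (fderiv ℝ Fpolar (τ, v, u)).det = -(τ * exp (τ * sin v) ^ 3 * sin (τ * cos v)) := by
  have hF := differentiable_Fpolar (τ, v, u)
  rw [ContinuousLinearMap.det, LinearMap.det_prod_three]
  simp only [ContinuousLinearMap.coe_coe]
  rw [fderiv_apply_of_hasDerivAt_comp hF rfl
      ((hasDerivAt_id' τ).prodMk ((hasDerivAt_const τ v).prodMk (hasDerivAt_const τ u)))
      (hasDerivAt_Fpolar_radius τ v u),
    fderiv_apply_of_hasDerivAt_comp hF rfl
      ((hasDerivAt_const v τ).prodMk ((hasDerivAt_id' v).prodMk (hasDerivAt_const v u)))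
      (hasDerivAt_Fpolar_altitude τ v u),
    fderiv_apply_of_hasDerivAt_comp hF rfl
      ((hasDerivAt_const u τ).prodMk ((hasDerivAt_const u v).prodMk (hasDerivAt_id' u)))
      (hasDerivAt_Fpolar_longitude τ v u)]
  dsimp only
  linear_combination (-(τ * exp (τ * sin v) ^ 3 * sin (τ * cos v))) *
    ((sin v ^ 2 + cos v ^ 2) * (sin (τ * cos v) ^ 2 + cos (τ * cos v) ^ 2) * sin_sq_add_cos_sq u +
      (sin (τ * cos v) ^ 2 + cos (τ * cos v) ^ 2) * sin_sq_add_cos_sq v +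
      sin_sq_add_cos_sq (τ * cos v))

theorem sq_add_sq_add_sq_Fpolar (p : ℝ × ℝ × ℝ) :
    (Fpolar p).1 ^ 2 + (Fpolar p).2.1 ^ 2 + (Fpolar p).2.2 ^ 2 = exp (p.1 * sin p.2.1) ^ 2 := by
  simp only [Fpolar]
  linear_combination exp (p.1 * sin p.2.1) ^ 2 *
    (sin (p.1 * cos p.2.1) ^ 2 * sin_sq_add_cos_sq p.2.2 + sin_sq_add_cos_sq (p.1 * cos p.2.1))

theorem mul_cos_mem_Ioo {τ v : ℝ} (hτ : τ ∈ Ioo 0 π) (hv : v ∈ Ioo (-(π / 2)) (π / 2)) :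
    τ * cos v ∈ Ioo 0 π :=
  ⟨mul_pos hτ.1 (cos_pos_of_mem_Ioo hv),
    (mul_le_of_le_one_right hτ.1.le (cos_le_one v)).trans_lt hτ.2⟩

theorem eq_and_eq_of_polarCoord_symm_eq {r₁ θ₁ r₂ θ₂ : ℝ} (hr₁ : 0 < r₁) (hθ₁ : θ₁ ∈ Ioo (-π) π)
    (hr₂ : 0 < r₂) (hθ₂ : θ₂ ∈ Ioo (-π) π) (hcos : r₁ * cos θ₁ = r₂ * cos θ₂)
    (hsin : r₁ * sin θ₁ = r₂ * sin θ₂) : r₁ = r₂ ∧ θ₁ = θ₂ :=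
  Prod.ext_iff.1 <| polarCoord.symm.injOn (x₁ := (r₁, θ₁)) (x₂ := (r₂, θ₂)) ⟨hr₁, hθ₁⟩ ⟨hr₂, hθ₂⟩
    (Prod.ext hcos hsin)

theorem injOn_Fpolar {ρ : ℝ} (hρ : ρ ≤ π) :
    InjOn Fpolar (Ioo 0 ρ ×ˢ Ioo (-(π / 2)) (π / 2) ×ˢ Ioo (-π) π) := by
  rintro ⟨τ₁, v₁, u₁⟩ ⟨hτ₁, hv₁, hu₁⟩ ⟨τ₂, v₂, u₂⟩ ⟨hτ₂, hv₂, hu₂⟩ h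
  dsimp only at hτ₁ hv₁ hu₁ hτ₂ hv₂ hu₂
  simp only [Fpolar, Prod.mk.injEq] at h
  obtain ⟨hx, hy, hz⟩ := h
  have hA₁ := mul_cos_mem_Ioo ⟨hτ₁.1, hτ₁.2.trans_le hρ⟩ hv₁
  have hA₂ := mul_cos_mem_Ioo ⟨hτ₂.1, hτ₂.2.trans_le hρ⟩ hv₂
  -- `Fpolar` is `exp` followed by three polar coordinate maps, each injective on its domain
  obtain ⟨hr, rfl⟩ := eq_and_eq_of_polarCoord_symm_eq
    (mul_pos (exp_pos _) (sin_pos_of_mem_Ioo hA₁)) hu₁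
    (mul_pos (exp_pos _) (sin_pos_of_mem_Ioo hA₂)) hu₂ hy hz
  obtain ⟨hE, hA⟩ := eq_and_eq_of_polarCoord_symm_eq (exp_pos _)
    ⟨by linarith [hA₁.1, pi_pos], hA₁.2⟩ (exp_pos _) ⟨by linarith [hA₂.1, pi_pos], hA₂.2⟩ hx hr
  obtain ⟨rfl, rfl⟩ := eq_and_eq_of_polarCoord_symm_eq hτ₁.1
    ⟨by linarith [hv₁.1, pi_pos], by linarith [hv₁.2, pi_pos]⟩ hτ₂.1
    ⟨by linarith [hv₂.1, pi_pos], by linarith [hv₂.2, pi_pos]⟩ hA (exp_injective hE)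
  rfl

instance : (volume : Measure (ℝ × ℝ × ℝ)).IsAddHaarMeasure :=
  Measure.prod.instIsAddHaarMeasure _ _

theorem Differentiable.image_ae_eq_image {E : Type*} [NormedAddCommGroup E] [NormedSpace ℝ E]
    [FiniteDimensional ℝ E] [MeasurableSpace E] [BorelSpace E] (μ : Measure E)
    [μ.IsAddHaarMeasure] {f : E → E} (hf : Differentiable ℝ f) {s t : Set E} (h : s =ᵐ[μ] t) :
    f '' s =ᵐ[μ] f '' t := by
  have image_diff_null {a b : Set E} (hab : μ (a \ b) = 0) : μ (f '' a \ f '' b) = 0 :=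
    measure_mono_null (by
        rintro _ ⟨⟨x, hx, rfl⟩, hy⟩
        exact ⟨x, ⟨hx, fun hxb => hy ⟨x, hxb, rfl⟩⟩, rfl⟩)
      (addHaar_image_eq_zero_of_differentiableOn_of_addHaar_eq_zero μ hf.differentiableOn hab)
  rw [ae_eq_set] at h ⊢
  exact ⟨image_diff_null h.1, image_diff_null h.2⟩

theorem abs_det_fderiv_Fpolar_mul_rpow {τ v : ℝ} (u : ℝ) (hτ : 0 ≤ τ)
    (hA : 0 ≤ sin (τ * cos v)) :
    |(fderiv ℝ Fpolar (τ, v, u)).det| *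
        ((Fpolar (τ, v, u)).1 ^ 2 + (Fpolar (τ, v, u)).2.1 ^ 2 + (Fpolar (τ, v, u)).2.2 ^ 2) ^
          (-(3 : ℝ) / 2) = τ * sin (τ * cos v) := by
  rw [det_fderiv_Fpolar, sq_add_sq_add_sq_Fpolar, abs_neg, abs_of_nonneg (by positivity),
    ← rpow_natCast, ← rpow_natCast, ← rpow_mul (exp_pos _).le, mul_right_comm τ,
    mul_assoc, ← rpow_add (exp_pos _)]
  norm_num

theorem setIntegral_Ioo_prod_Ioo_prod_Ioo {f : ℝ → ℝ → ℝ} (hf : Continuous (Function.uncurry f))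
    {a₁ b₁ a₂ b₂ a₃ b₃ : ℝ} (h₁ : a₁ ≤ b₁) (h₂ : a₂ ≤ b₂) (h₃ : a₃ ≤ b₃) :
    ∫ p in Ioo a₁ b₁ ×ˢ Ioo a₂ b₂ ×ˢ Ioo a₃ b₃, f p.1 p.2.1 =
      (b₃ - a₃) * ∫ x in a₁..b₁, ∫ y in a₂..b₂, f x y := by
  have hint : IntegrableOn (fun p : ℝ × ℝ × ℝ => f p.1 p.2.1)
      (Ioo a₁ b₁ ×ˢ Ioo a₂ b₂ ×ˢ Ioo a₃ b₃) (volume.prod volume) :=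
    ((hf.comp (continuous_fst.prodMk continuous_snd.fst)).continuousOn.integrableOn_compact
      (isCompact_Icc.prod (isCompact_Icc.prod isCompact_Icc))).mono_set
      (prod_mono Ioo_subset_Icc_self (prod_mono Ioo_subset_Icc_self Ioo_subset_Icc_self))
  have inner (x : ℝ) : ∫ q in Ioo a₂ b₂ ×ˢ Ioo a₃ b₃, f x q.1 =
      (b₃ - a₃) * ∫ y in Ioo a₂ b₂, f x y := by
    rw [Measure.volume_eq_prod, ← Measure.prod_restrict, integral_fun_fst, smul_eq_mul,
      measureReal_restrict_apply_univ, Real.volume_real_Ioo_of_le h₃]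
  rw [Measure.volume_eq_prod, setIntegral_prod _ hint]
  simp_rw [inner, integral_const_mul, intervalIntegral.integral_of_le h₁,
    intervalIntegral.integral_of_le h₂, integral_Ioc_eq_integral_Ioo]

/-- Theorem 2.4: the `S² × ℝ`-volume of the geodesic ball `B_ρ` of radius `0 < ρ < π`,
i.e. the Lebesgue integral of `(x² + y² + z²)^{-3/2}` over the image `B_ρ` of
`[0, ρ] × [−π/2, π/2] × (−π, π]` under the polar coordinate map, equals
`2π ∫₀^ρ ∫_{−π/2}^{π/2} τ · sin(τ cos v) dv dτ`. -/
theorem ball_volume (ρ : ℝ) (h0 : 0 < ρ) (hπ : ρ < π) :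
    (∫ q in Fpolar '' (Set.Icc 0 ρ ×ˢ Set.Icc (-(π / 2)) (π / 2) ×ˢ Set.Ioc (-π) π),
        (q.1 ^ 2 + q.2.1 ^ 2 + q.2.2 ^ 2) ^ (-(3 : ℝ) / 2)) =
      2 * π * ∫ τ in (0 : ℝ)..ρ, ∫ v in (-(π / 2))..(π / 2),
        τ * Real.sin (τ * Real.cos v) := by
  set s : Set (ℝ × ℝ × ℝ) := Ioo 0 ρ ×ˢ Ioo (-(π / 2)) (π / 2) ×ˢ Ioo (-π) π
  have hs : MeasurableSet s := measurableSet_Ioo.prod (measurableSet_Ioo.prod measurableSet_Ioo)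
  have hboundary :
      (Icc 0 ρ ×ˢ Icc (-(π / 2)) (π / 2) ×ˢ Ioc (-π) π : Set (ℝ × ℝ × ℝ)) =ᵐ[volume] s :=
    Measure.set_prod_ae_eq Ioo_ae_eq_Icc.symm
      (Measure.set_prod_ae_eq Ioo_ae_eq_Icc.symm Ioo_ae_eq_Ioc.symm)
  have hdensity : EqOn (fun p => |(fderiv ℝ Fpolar p).det| •
      ((Fpolar p).1 ^ 2 + (Fpolar p).2.1 ^ 2 + (Fpolar p).2.2 ^ 2) ^ (-(3 : ℝ) / 2))
      (fun p => p.1 * sin (p.1 * cos p.2.1)) s := by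
    rintro ⟨τ, v, u⟩ ⟨hτ, hv, -⟩
    exact abs_det_fderiv_Fpolar_mul_rpow u hτ.1.le
      (sin_nonneg_of_mem_Icc (mem_Icc_of_Ioo (mul_cos_mem_Ioo ⟨hτ.1, hτ.2.trans hπ⟩ hv)))
  rw [setIntegral_congr_set (differentiable_Fpolar.image_ae_eq_image volume hboundary),
    integral_image_eq_integral_abs_det_fderiv_smul volume hs
      (fun p _ => (differentiable_Fpolar p).hasFDerivAt.hasFDerivWithinAt) (injOn_Fpolar hπ.le),
    setIntegral_congr_fun hs hdensity,
    setIntegral_Ioo_prod_Ioo_prod_Ioo (f := fun τ v => τ * sin (τ * cos v)) (by fun_prop) h0.le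
      (by linarith [pi_pos]) (by linarith [pi_pos])]
  ring
end
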